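/- arXiv:2510.13156 — 2 statements merged into one kernel-verified Lean document; each statement's English description precedes it below -/
import Mathlib

section
/- Let k1 > 0, k2 < 0, ω = √(-k1 k2), v_th > 0, T0 = 2π/ω, and let m, m1, m2 be reals. Let y(t) = Ω(t)∫₀ᵗ Ω(-s) f(s) ds where f(s) = (m·V(s)² + m1·V(s), m2·H(s)) with (V(s),H(s)) = Ω(s)(v_th, 0)ᵀ and Ω(t) = [[cos(ωt), (k1/ω)sin(ωt)], [(k2/ω)sin(ωt), cos(ωt)]]. Then y(T0) = (π(m1+m2)/ω · v_th, 0). -/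
/-!
Since `ω T0 = 2π`, the fundamental matrix `Ω` returns to the identity after one period, so
`y T0` is the integral over a period of `Ω(-s) f(s)`. Using `k1 k2 = -ω²`, the components of this
integrand are trigonometric polynomials in `ω s`: the first is a combination of `cos³`, `cos²`
and `sin²`, the second of `sin cos²` and `sin cos`. Over a full period only `cos²` and `sin²`
survive, each contributing `π / ω`.
-/

open Real Matrix

theorem intervalIntegral.integral_pi_apply {ι E : Type*} [Fintype ι] [NormedAddCommGroup E]
    [NormedSpace ℝ E] [CompleteSpace E] {f : ℝ → ι → E} {a b : ℝ}
    (hf : IntervalIntegrable f MeasureTheory.volume a b) (i : ι) :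
    (∫ x in a..b, f x) i = ∫ x in a..b, f x i :=
  ((ContinuousLinearMap.proj (R := ℝ) (φ := fun _ : ι => E) i).intervalIntegral_comp_comm hf).symm

section FullPeriod

variable {ω : ℝ}

theorem integral_comp_mul_zero_two_pi_div (hω : ω ≠ 0) (g : ℝ → ℝ) :
    ∫ s in (0 : ℝ)..2 * π / ω, g (ω * s) = ω⁻¹ * ∫ u in (0 : ℝ)..2 * π, g u := by
  rw [intervalIntegral.integral_comp_mul_left g hω, mul_zero, mul_div_cancel₀ _ hω, smul_eq_mul]

theorem integral_cos_pow_three_add_cos_sq_add_sin_sq_period (hω : ω ≠ 0) (a b c : ℝ) :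
    ∫ s in (0 : ℝ)..2 * π / ω, a * cos (ω * s) ^ 3 + b * cos (ω * s) ^ 2 + c * sin (ω * s) ^ 2
      = (b + c) * π / ω := by
  rw [integral_comp_mul_zero_two_pi_div hω (fun u => a * cos u ^ 3 + b * cos u ^ 2 + c * sin u ^ 2),
    intervalIntegral.integral_add ((by fun_prop : Continuous _).intervalIntegrable _ _)
      ((by fun_prop : Continuous _).intervalIntegrable _ _),
    intervalIntegral.integral_add ((by fun_prop : Continuous _).intervalIntegrable _ _)
      ((by fun_prop : Continuous _).intervalIntegrable _ _)]
  simp only [intervalIntegral.integral_const_mul, integral_cos_pow_three, integral_cos_sq,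
    integral_sin_sq, sin_zero, cos_zero, sin_two_pi, cos_two_pi]
  ring

theorem integral_sin_mul_cos_sq_add_sin_mul_cos_period (hω : ω ≠ 0) (a b : ℝ) :
    ∫ s in (0 : ℝ)..2 * π / ω, a * sin (ω * s) * cos (ω * s) ^ 2 + b * sin (ω * s) * cos (ω * s)
      = 0 := by
  rw [integral_comp_mul_zero_two_pi_div hω (fun u => a * sin u * cos u ^ 2 + b * sin u * cos u),
    intervalIntegral.integral_add ((by fun_prop : Continuous _).intervalIntegrable _ _)
      ((by fun_prop : Continuous _).intervalIntegrable _ _)]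
  simp only [mul_assoc, intervalIntegral.integral_const_mul, integral_sin_mul_cos_sq,
    integral_sin_mul_cos₁, sin_zero, cos_zero, sin_two_pi, cos_two_pi]
  ring

end FullPeriod

section Oscillator

/-- The fundamental matrix `Ω(t)` of `v' = k1 h, h' = k2 v`, where `ω² = -k1 k2`. -/
noncomputable def oscillatorMatrix (k1 k2 ω t : ℝ) : Matrix (Fin 2) (Fin 2) ℝ :=
  !![cos (ω * t), (k1 / ω) * sin (ω * t); (k2 / ω) * sin (ω * t), cos (ω * t)]

variable {k1 k2 ω : ℝ}

theorem oscillatorMatrix_two_pi_div (hω : ω ≠ 0) : oscillatorMatrix k1 k2 ω (2 * π / ω) = 1 := by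
  rw [oscillatorMatrix, mul_div_cancel₀ _ hω, cos_two_pi, sin_two_pi, one_fin_two]
  simp

theorem oscillatorMatrix_neg_mulVec_forcing (hω : ω ≠ 0) (hk : k1 * k2 = -ω ^ 2)
    (vth m m1 m2 s : ℝ) :
    oscillatorMatrix k1 k2 ω (-s) *ᵥ
        ![m * (cos (ω * s) * vth) ^ 2 + m1 * (cos (ω * s) * vth),
          m2 * ((k2 / ω) * sin (ω * s) * vth)] =
      ![m * vth ^ 2 * cos (ω * s) ^ 3 + m1 * vth * cos (ω * s) ^ 2 + m2 * vth * sin (ω * s) ^ 2,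
        -(k2 / ω * m * vth ^ 2) * sin (ω * s) * cos (ω * s) ^ 2
          + k2 / ω * vth * (m2 - m1) * sin (ω * s) * cos (ω * s)] := by
  ext i
  fin_cases i <;>
    simp only [oscillatorMatrix, mulVec, dotProduct, Fin.sum_univ_two, of_apply, cons_val',
      cons_val_zero, cons_val_one, cons_val_fin_one, Fin.zero_eta, Fin.mk_one, Fin.isValue,
      cos_neg, sin_neg, mul_neg, neg_mul]
  · field_simp
    linear_combination (-(vth * m2 * sin (ω * s) ^ 2)) * hk
  · ring

end Oscillator

theorem stmt_6_general (k1 k2 ω T0 vth m m1 m2 : ℝ) (hk1 : 0 < k1) (hk2 : k2 < 0)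
    (hω : ω = Real.sqrt (-(k1 * k2))) (hT0 : T0 = 2 * Real.pi / ω)
    (Ω : ℝ → Matrix (Fin 2) (Fin 2) ℝ)
    (hΩ : ∀ t, Ω t = !![Real.cos (ω * t), (k1 / ω) * Real.sin (ω * t);
                        (k2 / ω) * Real.sin (ω * t), Real.cos (ω * t)])
    (V H : ℝ → ℝ) (hV : ∀ s, V s = Real.cos (ω * s) * vth)
    (hH : ∀ s, H s = (k2 / ω) * Real.sin (ω * s) * vth)
    (f : ℝ → Fin 2 → ℝ) (hfdef : ∀ s, f s = ![m * (V s) ^ 2 + m1 * V s, m2 * H s])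
    (y : ℝ → Fin 2 → ℝ)
    (hy : ∀ t, y t = (Ω t).mulVec (∫ s in (0:ℝ)..t, (Ω (-s)).mulVec (f s))) :
    y T0 = ![Real.pi * (m1 + m2) / ω * vth, 0] := by
  have hkk : 0 < -(k1 * k2) := neg_pos.2 (mul_neg_of_pos_of_neg hk1 hk2)
  have hω0 : ω ≠ 0 := by rw [hω]; exact (Real.sqrt_pos.2 hkk).ne'
  have hωsq : k1 * k2 = -ω ^ 2 := by rw [hω, Real.sq_sqrt hkk.le, neg_neg]
  obtain rfl : Ω = oscillatorMatrix k1 k2 ω := funext hΩ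
  simp only [hfdef, hV, hH, oscillatorMatrix_neg_mulVec_forcing hω0 hωsq] at hy
  rw [hy, hT0, oscillatorMatrix_two_pi_div hω0, one_mulVec]
  ext i
  rw [intervalIntegral.integral_pi_apply ((by fun_prop : Continuous _).intervalIntegrable _ _)]
  fin_cases i
  · simp only [Fin.zero_eta, Fin.isValue, cons_val_zero,
      integral_cos_pow_three_add_cos_sq_add_sin_sq_period hω0]
    ring
  · simp only [Fin.mk_one, Fin.isValue, cons_val_one, cons_val_zero,
      integral_sin_mul_cos_sq_add_sin_mul_cos_period hω0]

/-- The variational solution evaluated at T0 equals (π(m1+m2)v_th/ω, 0). -/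
theorem stmt_6 (k1 k2 ω T0 vth m m1 m2 : ℝ) (hk1 : 0 < k1) (hk2 : k2 < 0) (hvth : 0 < vth)
    (hω : ω = Real.sqrt (-(k1 * k2))) (hT0 : T0 = 2 * Real.pi / ω)
    (Ω : ℝ → Matrix (Fin 2) (Fin 2) ℝ)
    (hΩ : ∀ t, Ω t = !![Real.cos (ω * t), (k1 / ω) * Real.sin (ω * t);
                        (k2 / ω) * Real.sin (ω * t), Real.cos (ω * t)])
    (V H : ℝ → ℝ) (hV : ∀ s, V s = Real.cos (ω * s) * vth)
    (hH : ∀ s, H s = (k2 / ω) * Real.sin (ω * s) * vth)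
    (f : ℝ → Fin 2 → ℝ) (hfdef : ∀ s, f s = ![m * (V s) ^ 2 + m1 * V s, m2 * H s])
    (y : ℝ → Fin 2 → ℝ)
    (hy : ∀ t, y t = (Ω t).mulVec (∫ s in (0:ℝ)..t, (Ω (-s)).mulVec (f s))) :
    y T0 = ![Real.pi * (m1 + m2) / ω * vth, 0] :=
  stmt_6_general k1 k2 ω T0 vth m m1 m2 hk1 hk2 hω hT0 Ω hΩ V H hV hH f hfdef y hy
end

section
/- Let ω > 0, v_th > 0, m, m1, m2 ∈ ℝ, k1 > 0, with k2 = -ω²/k1. Define y : ℝ → ℝ² by y(t) = ( cos(ωt)(2 m v_th² sin(ωt)/(3ω) + t v_th(m1+m2)/2) + v_th sin(ωt)(2 m v_th + 3(m1 - m2))/(6ω), m v_th² cos(ωt)/(3k1) - m v_th² sin²(ωt)/(3k1) - t v_th (m1+m2) ω sin(ωt)/(2k1) - m v_th²/(3k1) ). Then y(0) = 0 and y'(t) = A y(t) + f(t), where A = [[0, k1],[k2, 0]] and f(t) = (m V(t)² + m1 V(t), m2 H(t)) with V(t) = v_th cos(ωt), H(t) = (k2/ω) v_th sin(ωt). -/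
/-! Both components of the closed form are trigonometric polynomials in `ωt` with coefficients
affine in `t`, so the ODE is checked by differentiating them term by term and comparing
coefficients; the only non-polynomial relation needed is `sin² + cos² = 1`. -/

open Real

theorem hasDerivAt_sin_mul (ω t : ℝ) :
    HasDerivAt (fun t => sin (ω * t)) (ω * cos (ω * t)) t := by
  simpa [mul_comm] using ((hasDerivAt_id' t).const_mul ω).sin

theorem hasDerivAt_cos_mul (ω t : ℝ) :
    HasDerivAt (fun t => cos (ω * t)) (-(ω * sin (ω * t))) t := by
  simpa [mul_comm] using ((hasDerivAt_id' t).const_mul ω).cos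

theorem HasDerivAt.vecCons₂ {f g : ℝ → ℝ} {f' g' t : ℝ} (hf : HasDerivAt f f' t)
    (hg : HasDerivAt g g' t) : HasDerivAt (fun t => ![f t, g t]) ![f', g'] t :=
  hasDerivAt_pi.2 <| Fin.forall_fin_two.2 ⟨hf, hg⟩

noncomputable def variationalSolutionFst (ω vth m m1 m2 t : ℝ) : ℝ :=
  cos (ω * t) * (2 * m * vth ^ 2 * sin (ω * t) / (3 * ω) + t * vth * (m1 + m2) / 2)
    + vth * sin (ω * t) * (2 * m * vth + 3 * (m1 - m2)) / (6 * ω)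

noncomputable def variationalSolutionSnd (ω vth m m1 m2 k1 t : ℝ) : ℝ :=
  m * vth ^ 2 * cos (ω * t) / (3 * k1) - m * vth ^ 2 * sin (ω * t) ^ 2 / (3 * k1)
    - t * vth * (m1 + m2) * ω * sin (ω * t) / (2 * k1) - m * vth ^ 2 / (3 * k1)

theorem hasDerivAt_variationalSolutionFst {ω k1 : ℝ} (hω : ω ≠ 0) (hk1 : k1 ≠ 0)
    (vth m m1 m2 t : ℝ) :
    HasDerivAt (variationalSolutionFst ω vth m m1 m2)
      (k1 * variationalSolutionSnd ω vth m m1 m2 k1 t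
        + m * (vth * cos (ω * t)) ^ 2 + m1 * (vth * cos (ω * t))) t := by
  have hs := hasDerivAt_sin_mul ω t
  have hc := hasDerivAt_cos_mul ω t
  have hderiv := (hc.mul (((hs.const_mul (2 * m * vth ^ 2)).div_const (3 * ω)).add
    ((((hasDerivAt_id' t).mul_const vth).mul_const (m1 + m2)).div_const 2))).add
    (((hs.const_mul vth).mul_const (2 * m * vth + 3 * (m1 - m2))).div_const (6 * ω))
  refine hderiv.congr_deriv ?_
  simp only [variationalSolutionSnd, Pi.add_apply]
  field_simp
  linear_combination -(12 * m * vth ^ 2) * sin_sq_add_cos_sq (ω * t)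

theorem hasDerivAt_variationalSolutionSnd {ω k1 k2 : ℝ} (hω : ω ≠ 0) (hk1 : k1 ≠ 0)
    (hk2 : k2 = -ω ^ 2 / k1) (vth m m1 m2 t : ℝ) :
    HasDerivAt (variationalSolutionSnd ω vth m m1 m2 k1)
      (k2 * variationalSolutionFst ω vth m m1 m2 t + m2 * ((k2 / ω) * vth * sin (ω * t))) t := by
  have hs := hasDerivAt_sin_mul ω t
  have hc := hasDerivAt_cos_mul ω t
  have hderiv := ((((hc.const_mul (m * vth ^ 2)).div_const (3 * k1)).sub
    (((hs.pow 2).const_mul (m * vth ^ 2)).div_const (3 * k1))).sub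
    ((((((hasDerivAt_id' t).mul_const vth).mul_const (m1 + m2)).mul_const ω).mul hs).div_const
      (2 * k1))).sub_const (m * vth ^ 2 / (3 * k1))
  refine hderiv.congr_deriv ?_
  subst hk2
  simp only [variationalSolutionFst]
  field_simp
  ring

theorem stmt_13_general (ω vth m m1 m2 k1 k2 : ℝ) (hω : 0 < ω) (hk1 : 0 < k1)
    (hk2 : k2 = -ω ^ 2 / k1)
    (y : ℝ → Fin 2 → ℝ)
    (hy : ∀ t, y t = ![Real.cos (ω * t) * (2 * m * vth ^ 2 * Real.sin (ω * t) / (3 * ω)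
            + t * vth * (m1 + m2) / 2)
          + vth * Real.sin (ω * t) * (2 * m * vth + 3 * (m1 - m2)) / (6 * ω),
        m * vth ^ 2 * Real.cos (ω * t) / (3 * k1)
          - m * vth ^ 2 * (Real.sin (ω * t)) ^ 2 / (3 * k1)
          - t * vth * (m1 + m2) * ω * Real.sin (ω * t) / (2 * k1)
          - m * vth ^ 2 / (3 * k1)]) :
    y 0 = 0 ∧
      ∀ t, HasDerivAt y
        ((!![(0:ℝ), k1; k2, 0]).mulVec (y t)
          + ![m * (vth * Real.cos (ω * t)) ^ 2 + m1 * (vth * Real.cos (ω * t)),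
              m2 * ((k2 / ω) * vth * Real.sin (ω * t))]) t := by
  obtain rfl : y = fun t =>
      ![variationalSolutionFst ω vth m m1 m2 t, variationalSolutionSnd ω vth m m1 m2 k1 t] :=
    funext hy
  refine ⟨by ext i; fin_cases i <;> simp [variationalSolutionFst, variationalSolutionSnd],
    fun t => ?_⟩
  convert (hasDerivAt_variationalSolutionFst hω.ne' hk1.ne' vth m m1 m2 t).vecCons₂
    (hasDerivAt_variationalSolutionSnd hω.ne' hk1.ne' hk2 vth m m1 m2 t) using 1
  ext i
  fin_cases i <;> simp <;> ring

/-- The explicit closed form y(t) (formula (A2) of the paper) satisfies y(0) = 0 and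
y' = A y + f. -/
theorem stmt_13 (ω vth m m1 m2 k1 k2 : ℝ) (hω : 0 < ω) (hvth : 0 < vth) (hk1 : 0 < k1)
    (hk2 : k2 = -ω ^ 2 / k1)
    (y : ℝ → Fin 2 → ℝ)
    (hy : ∀ t, y t = ![Real.cos (ω * t) * (2 * m * vth ^ 2 * Real.sin (ω * t) / (3 * ω)
            + t * vth * (m1 + m2) / 2)
          + vth * Real.sin (ω * t) * (2 * m * vth + 3 * (m1 - m2)) / (6 * ω),
        m * vth ^ 2 * Real.cos (ω * t) / (3 * k1)
          - m * vth ^ 2 * (Real.sin (ω * t)) ^ 2 / (3 * k1)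
          - t * vth * (m1 + m2) * ω * Real.sin (ω * t) / (2 * k1)
          - m * vth ^ 2 / (3 * k1)]) :
    y 0 = 0 ∧
      ∀ t, HasDerivAt y
        ((!![(0:ℝ), k1; k2, 0]).mulVec (y t)
          + ![m * (vth * Real.cos (ω * t)) ^ 2 + m1 * (vth * Real.cos (ω * t)),
              m2 * ((k2 / ω) * vth * Real.sin (ω * t))]) t :=
  stmt_13_general ω vth m m1 m2 k1 k2 hω hk1 hk2 y hy
end
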